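/- For the instance with exactly 2 agents and 4 goods in which both agents have the identical binary additive true valuation v with v(g_1) = 0 and v(g_2) = v(g_3) = v(g_4) = 1, Standard-E-C-E has no pure Nash equilibrium: for every bid profile (b_1, b_2) there is an agent i and an alternative bid b'_i such that agent i's true value for her bundle under (b'_i, b_{-i}) is strictly greater than under (b_1, b_2). -/

import Mathlib

/-!
Formalization of the strategic Envy-Cycle-Elimination (E-C-E) setting.

There are `n` agents and `m` goods (`Fin m`), with the predefined ordering of agents
and goods given by the orders on `Fin n` and `Fin m`.  A bid consists of a reported
additive valuation (a nonnegative value for every good) together with a preference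
list (a permutation of the goods).  E-C-E starts from empty bundles and, while
unallocated goods remain, selects a source of the envy graph (according to the rule of
the respective variant), adds one unallocated good to that agent's bundle (again
according to the rule of the respective variant), and then repeatedly eliminates envy
cycles, in a fixed order, until the envy graph has a source.
-/

open scoped Classical
open Finset

/-- A bid of an agent: a reported additive valuation (a nonnegative value for every
good) together with a preference list, a permutation of the goods. -/
structure Bid (m : ℕ) where
  val : Fin m → ℝ
  nonneg : ∀ g, 0 ≤ val g
  pref : Equiv.Perm (Fin m)

namespace ECE

variable {n m : ℕ}

/-- Reported (additive) value of a bundle. -/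
noncomputable def bval (b : Bid m) (S : Finset (Fin m)) : ℝ := ∑ g ∈ S, b.val g

/-- (True, additive) value of a bundle under the valuation `v`. -/
noncomputable def value (v : Fin m → ℝ) (S : Finset (Fin m)) : ℝ := ∑ g ∈ S, v g

/-- Envy-graph edge: agent `i` envies agent `j` (w.r.t. the reported valuations) under
the partial allocation `P`. -/
def envies (b : Fin n → Bid m) (P : Fin n → Finset (Fin m)) (i j : Fin n) : Prop :=
  bval (b i) (P i) < bval (b i) (P j)

/-- The sources (vertices of in-degree 0) of the envy graph. -/
noncomputable def sources (b : Fin n → Bid m) (P : Fin n → Finset (Fin m)) :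
    Finset (Fin n) :=
  univ.filter fun i => ∀ j, ¬ envies b P j i

/-- The envy cycles of the current envy graph, represented as cyclic permutations `σ`
of the agents such that every agent moved by `σ` envies her image under `σ`. -/
noncomputable def cycleSet (b : Fin n → Bid m) (P : Fin n → Finset (Fin m)) :
    Finset (Equiv.Perm (Fin n)) :=
  univ.filter fun σ => σ.IsCycle ∧ ∀ i, σ i ≠ i → envies b P i (σ i)

/-- A fixed enumeration of the permutations of the agents, providing the fixed
(lexicographic) order in which envy cycles are eliminated. -/
noncomputable def permIdx (n : ℕ) :
    Equiv.Perm (Fin n) ≃ Fin (Fintype.card (Equiv.Perm (Fin n))) :=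
  Fintype.equivFin _

/-- Eliminate one envy cycle (the first one in the fixed order): every agent on the
cycle receives the bundle of the agent she envies. -/
noncomputable def elimOnce (b : Fin n → Bid m) (P : Fin n → Finset (Fin m)) :
    Fin n → Finset (Fin m) :=
  if h : (cycleSet b P).Nonempty then
    let σ := (permIdx n).symm (((cycleSet b P).image (permIdx n)).min' (h.image _))
    fun i => P (σ i)
  else P

/-- Repeatedly eliminate envy cycles until the envy graph has a source. -/
noncomputable def resolve (b : Fin n → Bid m) :
    ℕ → (Fin n → Finset (Fin m)) → Fin n → Finset (Fin m)
  | 0, P => P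
  | fuel + 1, P => if (sources b P).Nonempty then P else resolve b fuel (elimOnce b P)

/-- The state (current partial allocation, remaining unallocated goods) of an E-C-E
run after a given number of steps.  In each step, if unallocated goods remain, the
agent chosen by `pickAgent` (a source of the envy graph) receives the good chosen by
`pickItem`, and afterwards envy cycles are eliminated until the graph has a source. -/
noncomputable def stateECE (b : Fin n → Bid m)
    (pickAgent : (Fin n → Finset (Fin m)) → Option (Fin n))
    (pickItem : Fin n → (R : Finset (Fin m)) → R.Nonempty → Fin m) :
    ℕ → (Fin n → Finset (Fin m)) × Finset (Fin m)
  | 0 => (fun _ => ∅, univ)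
  | k + 1 =>
    let s := stateECE b pickAgent pickItem k
    if hR : s.2.Nonempty then
      match pickAgent s.1 with
      | none => s
      | some i =>
        let g := pickItem i s.2 hR
        (resolve b (n * n + 1) (fun j => if j = i then insert g (s.1 j) else s.1 j),
          s.2.erase g)
    else s

/-- Source selection of Standard-E-C-E: among multiple sources, the agent earliest in
the predefined ordering of the agents. -/
noncomputable def stdAgent (b : Fin n → Bid m) (P : Fin n → Finset (Fin m)) :
    Option (Fin n) :=
  if h : (sources b P).Nonempty then some ((sources b P).min' h) else none

/-- Source selection of the Priority variants: among multiple sources, those having at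
least one outgoing envy edge have priority, ties broken by the predefined ordering of
the agents. -/
noncomputable def priAgent (b : Fin n → Bid m) (P : Fin n → Finset (Fin m)) :
    Option (Fin n) :=
  if h' : ((sources b P).filter fun i => ∃ j, envies b P i j).Nonempty then
    some (((sources b P).filter fun i => ∃ j, envies b P i j).min' h')
  else if h : (sources b P).Nonempty then some ((sources b P).min' h) else none

/-- The unallocated good of highest reported value, ties broken by the predefined
ordering of the goods. -/
noncomputable def bestItem (v : Fin m → ℝ) (R : Finset (Fin m)) (hR : R.Nonempty) :
    Fin m :=
  (R.filter fun g => ∀ g' ∈ R, v g' ≤ v g).min' (by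
    obtain ⟨g, hg, hmax⟩ := R.exists_max_image v hR
    exact ⟨g, mem_filter.2 ⟨hg, hmax⟩⟩)

/-- The earliest unallocated good in the preference list `pref`. -/
noncomputable def preferredItem (pref : Equiv.Perm (Fin m)) (R : Finset (Fin m))
    (hR : R.Nonempty) : Fin m :=
  pref.symm ((R.image pref).min' (hR.image _))

/-- Standard-E-C-E: sources chosen by the predefined agent ordering, goods assigned in
the predefined ordering of the goods. -/
noncomputable def Standard (b : Fin n → Bid m) : Fin n → Finset (Fin m) :=
  (stateECE b (stdAgent b) (fun _ R hR => R.min' hR) m).1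

/-- Priority-E-C-E: envious sources have priority (ties broken by the agent ordering),
goods assigned in the predefined ordering of the goods. -/
noncomputable def Priority (b : Fin n → Bid m) : Fin n → Finset (Fin m) :=
  (stateECE b (priAgent b) (fun _ R hR => R.min' hR) m).1

/-- Best-Item-E-C-E: envious sources have priority, and the chosen agent receives her
unallocated good of highest reported value (ties broken by the good ordering). -/
noncomputable def BestItemECE (b : Fin n → Bid m) : Fin n → Finset (Fin m) :=
  (stateECE b (priAgent b) (fun i R hR => bestItem (b i).val R hR) m).1

/-- Preferred-Item-E-C-E: envious sources have priority, and the chosen agent receives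
the earliest unallocated good in her preference list. -/
noncomputable def PreferredItemECE (b : Fin n → Bid m) : Fin n → Finset (Fin m) :=
  (stateECE b (priAgent b) (fun i R hR => preferredItem (b i).pref R hR) m).1

/-- The allocation `A` is `α`-EF1 from agent `i`'s perspective w.r.t. the valuation
`v`: for every agent `j` with nonempty bundle there is a good `g ∈ A j` with
`v (A i) ≥ α · v (A j \ {g})`. -/
def EF1From (α : ℝ) (v : Fin m → ℝ) (A : Fin n → Finset (Fin m)) (i : Fin n) : Prop :=
  ∀ j : Fin n, (A j).Nonempty → ∃ g ∈ A j, α * value v ((A j).erase g) ≤ value v (A i)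

/-- The allocation `A` is EF1 w.r.t. the valuations `v`. -/
def IsEF1 (v : Fin n → Fin m → ℝ) (A : Fin n → Finset (Fin m)) : Prop :=
  ∀ i : Fin n, EF1From 1 (v i) A i

/-- Agent `i`'s bid in the profile `b` is a best response to the others' bids, w.r.t.
her true (additive) valuation `v`: no alternative bid gives her a bundle of strictly
larger true value. -/
def BestResponse (Mech : (Fin n → Bid m) → Fin n → Finset (Fin m))
    (v : Fin m → ℝ) (b : Fin n → Bid m) (i : Fin n) : Prop :=
  ∀ b' : Bid m, value v (Mech (Function.update b i b') i) ≤ value v (Mech b i)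

/-- The bid profile `b` is a pure Nash equilibrium of the mechanism `Mech` w.r.t. the
true (additive) valuations `v`. -/
def IsPNE (Mech : (Fin n → Bid m) → Fin n → Finset (Fin m))
    (v : Fin n → Fin m → ℝ) (b : Fin n → Bid m) : Prop :=
  ∀ i : Fin n, BestResponse Mech (v i) b i

end ECE

open ECE

/-!
The two bundles are disjoint, so the agents' true values add up to at most `3`: if agent `0`
gets less than `2`, then agent `0` can deviate, and otherwise agent `1` gets at most `1` and can
deviate. In either case a suitable report (three candidates for agent `0` and two for agent `1`,
chosen according to the other agent's report) secures two goods of value `1`; this is checked by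
running the four rounds of Standard-E-C-E, splitting on the envy relations that depend on the
other agent's report.
-/

open Function

namespace ECE

section General

variable {n m : ℕ}

lemma exists_mem_cycleSet_elimOnce_eq (b : Fin n → Bid m) {P : Fin n → Finset (Fin m)}
    (h : (cycleSet b P).Nonempty) : ∃ σ ∈ cycleSet b P, elimOnce b P = P ∘ σ := by
  refine ⟨_, ?_, dif_pos h⟩
  obtain ⟨σ, hσ, he⟩ := mem_image.1 (min'_mem _ (h.image (permIdx n)))
  rwa [← he, Equiv.symm_apply_apply]

lemma elimOnce_eq_comp_perm (b : Fin n → Bid m) (P : Fin n → Finset (Fin m)) :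
    ∃ σ : Equiv.Perm (Fin n), elimOnce b P = P ∘ σ := by
  by_cases h : (cycleSet b P).Nonempty
  · obtain ⟨σ, -, hσ⟩ := exists_mem_cycleSet_elimOnce_eq b h
    exact ⟨σ, hσ⟩
  · exact ⟨1, dif_neg h⟩

lemma resolve_eq_comp_perm (b : Fin n → Bid m) (fuel : ℕ) (P : Fin n → Finset (Fin m)) :
    ∃ σ : Equiv.Perm (Fin n), resolve b fuel P = P ∘ σ := by
  induction fuel generalizing P with
  | zero => exact ⟨1, rfl⟩
  | succ fuel ih =>
    rw [resolve]
    split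
    · exact ⟨1, rfl⟩
    · obtain ⟨σ, hσ⟩ := elimOnce_eq_comp_perm b P
      obtain ⟨τ, hτ⟩ := ih (elimOnce b P)
      exact ⟨σ * τ, by rw [hτ, hσ]; rfl⟩

lemma not_envies_of_eq_empty (b : Fin n → Bid m) {P : Fin n → Finset (Fin m)} {i j : Fin n}
    (h : P j = ∅) : ¬ envies b P i j := by
  unfold envies bval
  rw [h, sum_empty, not_lt]
  exact sum_nonneg fun g _ => (b i).nonneg g

def IsPartialAllocation (P : Fin n → Finset (Fin m)) (R : Finset (Fin m)) : Prop :=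
  Pairwise (Disjoint on P) ∧ ∀ i, Disjoint (P i) R

lemma IsPartialAllocation.comp_perm {P : Fin n → Finset (Fin m)} {R : Finset (Fin m)}
    (h : IsPartialAllocation P R) (σ : Equiv.Perm (Fin n)) : IsPartialAllocation (P ∘ σ) R :=
  ⟨h.1.comp_of_injective σ.injective, fun i => h.2 (σ i)⟩

lemma IsPartialAllocation.allocate {P : Fin n → Finset (Fin m)} {R : Finset (Fin m)}
    (h : IsPartialAllocation P R) (i : Fin n) {g : Fin m} (hg : g ∈ R) :
    IsPartialAllocation (fun j => if j = i then insert g (P j) else P j) (R.erase g) := by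
  have hgP : ∀ j, g ∉ P j := fun j hj => disjoint_left.1 (h.2 j) hj hg
  refine ⟨fun j k hjk => ?_, fun j => ?_⟩
  · show Disjoint (if j = i then _ else _) (if k = i then _ else _)
    split_ifs with hj hk hk
    · exact absurd (hj.trans hk.symm) hjk
    · exact disjoint_insert_left.2 ⟨hgP k, h.1 hjk⟩
    · exact disjoint_insert_right.2 ⟨hgP j, h.1 hjk⟩
    · exact h.1 hjk
  · have hPR : Disjoint (P j) (R.erase g) := (h.2 j).mono_right (erase_subset g R)
    show Disjoint (if j = i then _ else _) _
    split_ifs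
    · exact disjoint_insert_left.2 ⟨notMem_erase g R, hPR⟩
    · exact hPR

lemma stateECE_succ_of_eq (b : Fin n → Bid m)
    {pickAgent : (Fin n → Finset (Fin m)) → Option (Fin n)}
    {pickItem : Fin n → (R : Finset (Fin m)) → R.Nonempty → Fin m} {k : ℕ}
    {P : Fin n → Finset (Fin m)} {R : Finset (Fin m)}
    (hk : stateECE b pickAgent pickItem k = (P, R)) (hR : R.Nonempty) {i : Fin n}
    (hi : pickAgent P = some i) :
    stateECE b pickAgent pickItem (k + 1) =
      (resolve b (n * n + 1) (fun j => if j = i then insert (pickItem i R hR) (P j) else P j),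
        R.erase (pickItem i R hR)) := by
  rw [stateECE, hk]
  simp only [hi, dif_pos hR]

lemma isPartialAllocation_stateECE (b : Fin n → Bid m)
    (pickAgent : (Fin n → Finset (Fin m)) → Option (Fin n))
    (pickItem : Fin n → (R : Finset (Fin m)) → R.Nonempty → Fin m)
    (hpick : ∀ i R hR, pickItem i R hR ∈ R) (k : ℕ) :
    IsPartialAllocation (stateECE b pickAgent pickItem k).1
      (stateECE b pickAgent pickItem k).2 := by
  induction k with
  | zero => exact ⟨fun _ _ _ => disjoint_empty_left _, fun _ => disjoint_empty_left _⟩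
  | succ k ih =>
    rcases hs : stateECE b pickAgent pickItem k with ⟨P, R⟩
    rw [hs] at ih
    by_cases hR : R.Nonempty
    · cases hi : pickAgent P with
      | none => simpa [stateECE, hs, hR, hi] using ih
      | some i =>
        rw [stateECE_succ_of_eq b hs hR hi]
        obtain ⟨σ, hσ⟩ := resolve_eq_comp_perm b (n * n + 1)
          (fun j => if j = i then insert (pickItem i R hR) (P j) else P j)
        rw [hσ]
        exact (ih.allocate i (hpick i R hR)).comp_perm σ
    · simpa [stateECE, hs, hR] using ih

lemma pairwise_disjoint_standard (b : Fin n → Bid m) : Pairwise (Disjoint on Standard b) :=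
  (isPartialAllocation_stateECE b _ _ (fun _ R hR => min'_mem R hR) m).1

noncomputable def standardState (b : Fin n → Bid m) (k : ℕ) :
    (Fin n → Finset (Fin m)) × Finset (Fin m) :=
  stateECE b (stdAgent b) (fun _ R hR => R.min' hR) k

lemma standard_eq_standardState_fst (b : Fin n → Bid m) : Standard b = (standardState b m).1 :=
  rfl

lemma value_ite_eq_card_erase (a : Fin m) (S : Finset (Fin m)) :
    value (fun g => if g = a then (0 : ℝ) else 1) S = (S.erase a).card := by
  rw [value, sum_ite, sum_const_zero, zero_add, sum_const, nsmul_one, filter_ne']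

lemma card_erase_add_card_erase_lt {S T : Finset (Fin m)} (h : Disjoint S T)
    (a : Fin m) : (S.erase a).card + (T.erase a).card < m := by
  rw [← card_union_of_disjoint (h.mono (erase_subset a S) (erase_subset a T)),
    ← erase_union_distrib]
  simpa using card_lt_univ_of_notMem (notMem_erase a (S ∪ T))

end General

section TwoAgents

variable {m : ℕ} (b : Fin 2 → Bid m)

def MutualEnvy (P : Fin 2 → Finset (Fin m)) : Prop := envies b P 0 1 ∧ envies b P 1 0

lemma not_envies_self (P : Fin 2 → Finset (Fin m)) (i : Fin 2) : ¬ envies b P i i :=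
  lt_irrefl _

lemma mem_sources_zero {P : Fin 2 → Finset (Fin m)} (h : ¬ envies b P 1 0) :
    0 ∈ sources b P := by
  simp only [sources, mem_filter, mem_univ, true_and]
  intro j
  fin_cases j
  exacts [not_envies_self b P 0, h]

lemma mem_sources_one {P : Fin 2 → Finset (Fin m)} (h : ¬ envies b P 0 1) :
    1 ∈ sources b P := by
  simp only [sources, mem_filter, mem_univ, true_and]
  intro j
  fin_cases j
  exacts [h, not_envies_self b P 1]

lemma stdAgent_eq_zero {P : Fin 2 → Finset (Fin m)} (h : ¬ envies b P 1 0) :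
    stdAgent b P = some 0 := by
  have h0 := mem_sources_zero b h
  rw [stdAgent, dif_pos ⟨0, h0⟩]
  exact congrArg some (le_antisymm (min'_le _ _ h0) (Fin.zero_le _))

lemma stdAgent_eq_one {P : Fin 2 → Finset (Fin m)} (h10 : envies b P 1 0)
    (h01 : ¬ envies b P 0 1) : stdAgent b P = some 1 := by
  have hsrc : sources b P = {1} := by
    refine eq_singleton_iff_unique_mem.2 ⟨mem_sources_one b h01, fun i hi => ?_⟩
    fin_cases i
    · exact absurd h10 ((mem_filter.1 hi).2 1)
    · rfl
  simp only [stdAgent, hsrc, min'_singleton, singleton_nonempty, dif_pos]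

lemma resolve_succ_eq_self {P : Fin 2 → Finset (Fin m)} (h : ¬ MutualEnvy b P) (fuel : ℕ) :
    resolve b (fuel + 1) P = P := by
  refine if_pos ?_
  by_cases h10 : envies b P 1 0
  · exact ⟨1, mem_sources_one b fun h01 => h ⟨h01, h10⟩⟩
  · exact ⟨0, mem_sources_zero b h10⟩

lemma swap_mem_cycleSet {P : Fin 2 → Finset (Fin m)} (h : MutualEnvy b P) :
    Equiv.swap 0 1 ∈ cycleSet b P := by
  refine mem_filter.2 ⟨mem_univ _, Equiv.Perm.isCycle_swap (by decide), fun i _ => ?_⟩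
  fin_cases i
  exacts [h.1, h.2]

lemma elimOnce_eq_swap {P : Fin 2 → Finset (Fin m)} (h : MutualEnvy b P) :
    elimOnce b P = ![P 1, P 0] := by
  obtain ⟨σ, hσ, he⟩ := exists_mem_cycleSet_elimOnce_eq b ⟨_, swap_mem_cycleSet b h⟩
  have hσ1 : σ = Equiv.swap 0 1 := by
    have hne : σ ≠ 1 := (mem_filter.1 hσ).2.1.ne_one
    clear hσ he
    revert σ
    decide
  rw [he, hσ1]
  funext i
  fin_cases i <;> rfl

lemma resolve_eq_swap {P : Fin 2 → Finset (Fin m)} (h : MutualEnvy b P) (fuel : ℕ) :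
    resolve b (fuel + 2) P = ![P 1, P 0] := by
  have hsrc : ¬ (sources b P).Nonempty := by
    rintro ⟨i, hi⟩
    fin_cases i
    exacts [(mem_filter.1 hi).2 1 h.2, (mem_filter.1 hi).2 0 h.1]
  rw [resolve, if_neg hsrc, elimOnce_eq_swap b h]
  exact resolve_succ_eq_self b (fun h' : MutualEnvy b ![P 1, P 0] => lt_asymm h.1 h'.1) fuel

lemma not_mutualEnvy_of_not_envies_zero_one {P : Fin 2 → Finset (Fin m)}
    (h : ¬ envies b P 0 1) : ¬ MutualEnvy b P := fun h' => h h'.1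

lemma not_mutualEnvy_of_not_envies_one_zero {P : Fin 2 → Finset (Fin m)}
    (h : ¬ envies b P 1 0) : ¬ MutualEnvy b P := fun h' => h h'.2

lemma standardState_succ_of_source_eq {k : ℕ} {P : Fin 2 → Finset (Fin m)}
    {R : Finset (Fin m)} (hk : standardState b k = (P, R)) {g : Fin m}
    (hg : g ∈ R ∧ ∀ x ∈ R, g ≤ x) {i : Fin 2} (hi : stdAgent b P = some i) :
    standardState b (k + 1) =
      (resolve b 5 (fun j => if j = i then insert g (P j) else P j), R.erase g) := by
  have hR : R.Nonempty := ⟨g, hg.1⟩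
  have hmin : R.min' hR = g := le_antisymm (min'_le R g hg.1) (le_min' R hR g hg.2)
  rw [standardState, stateECE_succ_of_eq b hk hR hi, hmin]

lemma standardState_succ_zero {k : ℕ} {S₀ S₁ R : Finset (Fin m)}
    (hk : standardState b k = (![S₀, S₁], R)) (g : Fin m)
    (hg : g ∈ R ∧ ∀ x ∈ R, g ≤ x) (h10 : ¬ envies b ![S₀, S₁] 1 0) :
    standardState b (k + 1) = (resolve b 5 ![insert g S₀, S₁], R.erase g) := by
  rw [standardState_succ_of_source_eq b hk hg (stdAgent_eq_zero b h10)]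
  congr
  funext j
  fin_cases j <;> rfl

lemma standardState_succ_one {k : ℕ} {S₀ S₁ R : Finset (Fin m)}
    (hk : standardState b k = (![S₀, S₁], R)) (g : Fin m)
    (hg : g ∈ R ∧ ∀ x ∈ R, g ≤ x) (h10 : envies b ![S₀, S₁] 1 0)
    (h01 : ¬ envies b ![S₀, S₁] 0 1) :
    standardState b (k + 1) = (resolve b 5 ![S₀, insert g S₁], R.erase g) := by
  rw [standardState_succ_of_source_eq b hk hg (stdAgent_eq_one b h10 h01)]
  congr
  funext j
  fin_cases j <;> rfl

lemma standardState_zero : standardState b 0 = (![∅, ∅], univ) := by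
  rw [standardState, stateECE]
  congr
  funext j
  fin_cases j <;> rfl

end TwoAgents

section Instance

lemma standardState_one (b : Fin 2 → Bid 4) : standardState b 1 = (![{0}, ∅], {1, 2, 3}) := by
  rw [standardState_succ_zero b (standardState_zero b) 0 (by decide)
      (not_envies_of_eq_empty b rfl), insert_empty_eq,
    resolve_succ_eq_self b
      (not_mutualEnvy_of_not_envies_zero_one b (not_envies_of_eq_empty b rfl))]
  decide

lemma standardState_two_of_not_envies (b : Fin 2 → Bid 4) (h : ¬ envies b ![{0}, ∅] 1 0) :
    standardState b 2 = (![{0, 1}, ∅], {2, 3}) := by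
  rw [standardState_succ_zero b (standardState_one b) 1 (by decide) h,
    resolve_succ_eq_self b
      (not_mutualEnvy_of_not_envies_zero_one b (not_envies_of_eq_empty b rfl))]
  decide

lemma standardState_two_of_envies (b : Fin 2 → Bid 4) (h10 : envies b ![{0}, ∅] 1 0)
    (h : ¬ envies b ![{0}, {1}] 1 0) : standardState b 2 = (![{0}, {1}], {2, 3}) := by
  rw [standardState_succ_one b (standardState_one b) 1 (by decide) h10
      (not_envies_of_eq_empty b rfl), insert_empty_eq,
    resolve_succ_eq_self b (not_mutualEnvy_of_not_envies_one_zero b h)]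
  decide

lemma two_le_card_erase_standard_zero_of_nonpos (b : Fin 2 → Bid 4)
    (ha : (b 0).val = ![0, 0, 9, 9]) (hc : (b 1).val 0 ≤ 0) :
    2 ≤ ((Standard b 0).erase 0).card := by
  have s2 := standardState_two_of_not_envies b (by simpa [envies, bval] using hc)
  rw [standard_eq_standardState_fst]
  by_cases h3 : envies b ![{0, 1}, ∅] 1 0
  · have h01 : ¬ envies b ![{0, 1}, ∅] 0 1 := not_envies_of_eq_empty b rfl
    by_cases hswap : MutualEnvy b ![{0, 1}, {2}]
    · have s3 : standardState b 3 = (![{2}, {0, 1}], {3}) := by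
        rw [standardState_succ_one b s2 2 (by decide) h3 h01, insert_empty_eq,
          resolve_eq_swap b hswap]
        decide
      have s4 : standardState b 4 = (![{2, 3}, {0, 1}], ∅) := by
        rw [standardState_succ_zero b s3 3 (by decide) (not_lt.2 hswap.2.le),
          resolve_succ_eq_self b (not_mutualEnvy_of_not_envies_zero_one b
            (by simp [envies, bval, ha]))]
        decide
      rw [s4]
      decide
    · have s3 : standardState b 3 = (![{0, 1}, {2}], {3}) := by
        rw [standardState_succ_one b s2 2 (by decide) h3 h01, insert_empty_eq,
          resolve_succ_eq_self b hswap]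
        decide
      have s4 : standardState b 4 = (![{0, 1, 3}, {2}], ∅) := by
        rw [standardState_succ_zero b s3 3 (by decide)
            (fun h => hswap ⟨by simp [envies, bval, ha], h⟩),
          resolve_succ_eq_self b (not_mutualEnvy_of_not_envies_zero_one b
            (by simp [envies, bval, ha]))]
        decide
      rw [s4]
      decide
  · have s3 : standardState b 3 = (![{0, 1, 2}, ∅], {3}) := by
      rw [standardState_succ_zero b s2 2 (by decide) h3,
        resolve_succ_eq_self b (not_mutualEnvy_of_not_envies_zero_one b
          (not_envies_of_eq_empty b rfl))]
      decide
    by_cases h4 : envies b ![{0, 1, 2}, ∅] 1 0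
    · have s4 : standardState b 4 = (![{0, 1, 2}, {3}], ∅) := by
        rw [standardState_succ_one b s3 3 (by decide) h4 (not_envies_of_eq_empty b rfl),
          insert_empty_eq, resolve_succ_eq_self b (not_mutualEnvy_of_not_envies_zero_one b
            (by simp [envies, bval, ha]))]
        decide
      rw [s4]
      decide
    · have s4 : standardState b 4 = (![{0, 1, 2, 3}, ∅], ∅) := by
        rw [standardState_succ_zero b s3 3 (by decide) h4,
          resolve_succ_eq_self b (not_mutualEnvy_of_not_envies_zero_one b
            (not_envies_of_eq_empty b rfl))]
        decide
      rw [s4]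
      decide

lemma two_le_card_erase_standard_zero_of_lt (b : Fin 2 → Bid 4)
    (ha : (b 0).val = ![0, 1, 1, 0]) (hc₀ : 0 < (b 1).val 0)
    (hc₁ : (b 1).val 1 < (b 1).val 0) :
    2 ≤ ((Standard b 0).erase 0).card := by
  have s2 : standardState b 2 = (![{1}, {0}], {2, 3}) := by
    rw [standardState_succ_one b (standardState_one b) 1 (by decide)
        (by simpa [envies, bval] using hc₀) (not_envies_of_eq_empty b rfl), insert_empty_eq,
      resolve_eq_swap b ⟨by simp [envies, bval, ha], by simpa [envies, bval] using hc₁⟩]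
    decide
  have s3 : standardState b 3 = (![{1, 2}, {0}], {3}) := by
    rw [standardState_succ_zero b s2 2 (by decide) (by simpa [envies, bval] using hc₁.le),
      resolve_succ_eq_self b (not_mutualEnvy_of_not_envies_zero_one b
        (by simp [envies, bval, ha]))]
    decide
  rw [standard_eq_standardState_fst]
  by_cases h4 : envies b ![{1, 2}, {0}] 1 0
  · have s4 : standardState b 4 = (![{1, 2}, {0, 3}], ∅) := by
      rw [standardState_succ_one b s3 3 (by decide) h4 (by simp [envies, bval, ha]),
        resolve_succ_eq_self b (not_mutualEnvy_of_not_envies_zero_one b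
          (by simp [envies, bval, ha]))]
      decide
    rw [s4]
    decide
  · have s4 : standardState b 4 = (![{1, 2, 3}, {0}], ∅) := by
      rw [standardState_succ_zero b s3 3 (by decide) h4,
        resolve_succ_eq_self b (not_mutualEnvy_of_not_envies_zero_one b
          (by simp [envies, bval, ha]))]
      decide
    rw [s4]
    decide

lemma two_le_card_erase_standard_zero_of_le (b : Fin 2 → Bid 4)
    (ha : (b 0).val = ![0, 9, 1, 9]) (hc₀ : 0 < (b 1).val 0)
    (hc₁ : (b 1).val 0 ≤ (b 1).val 1) :
    2 ≤ ((Standard b 0).erase 0).card := by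
  have h3 : ¬ envies b ![{0}, {1}] 1 0 := by simpa [envies, bval] using hc₁
  have s2 := standardState_two_of_envies b (by simpa [envies, bval] using hc₀) h3
  rw [standard_eq_standardState_fst]
  by_cases hswap : MutualEnvy b ![{0, 2}, {1}]
  · have s3 : standardState b 3 = (![{1}, {0, 2}], {3}) := by
      rw [standardState_succ_zero b s2 2 (by decide) h3, pair_comm, resolve_eq_swap b hswap]
      decide
    have s4 : standardState b 4 = (![{1, 3}, {0, 2}], ∅) := by
      rw [standardState_succ_zero b s3 3 (by decide) (not_lt.2 hswap.2.le),
        resolve_succ_eq_self b (not_mutualEnvy_of_not_envies_zero_one b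
          (by simp [envies, bval, ha]; norm_num))]
      decide
    rw [s4]
    decide
  · have s3 : standardState b 3 = (![{0, 2}, {1}], {3}) := by
      rw [standardState_succ_zero b s2 2 (by decide) h3, pair_comm,
        resolve_succ_eq_self b hswap]
      decide
    have s4 : standardState b 4 = (![{0, 2, 3}, {1}], ∅) := by
      rw [standardState_succ_zero b s3 3 (by decide)
          (fun h => hswap ⟨by simp [envies, bval, ha], h⟩),
        resolve_succ_eq_self b (not_mutualEnvy_of_not_envies_zero_one b
          (by simp [envies, bval, ha]))]
      decide
    rw [s4]
    decide

lemma two_le_card_erase_standard_one_of_le (b : Fin 2 → Bid 4) (hc : (b 1).val = ![0, 1, 0, 9])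
    (h : (b 0).val 2 ≤ (b 0).val 0 + (b 0).val 1) : 2 ≤ ((Standard b 1).erase 0).card := by
  have s2 := standardState_two_of_not_envies b (by simp [envies, bval, hc])
  have s3 : standardState b 3 = (![{0, 1}, {2}], {3}) := by
    rw [standardState_succ_one b s2 2 (by decide) (by simp [envies, bval, hc])
        (not_envies_of_eq_empty b rfl), insert_empty_eq,
      resolve_succ_eq_self b (not_mutualEnvy_of_not_envies_zero_one b
        (by simpa [envies, bval, add_comm] using h))]
    decide
  have s4 : standardState b 4 = (![{0, 1}, {2, 3}], ∅) := by
    rw [standardState_succ_one b s3 3 (by decide) (by simp [envies, bval, hc])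
        (by simpa [envies, bval, add_comm] using h),
      resolve_succ_eq_self b (not_mutualEnvy_of_not_envies_one_zero b
        (by simp [envies, bval, hc]))]
    decide
  rw [standard_eq_standardState_fst, s4]
  decide

lemma two_le_card_erase_standard_one_of_lt (b : Fin 2 → Bid 4) (hc : (b 1).val = ![1, 1, 9, 9])
    (h : (b 0).val 0 + (b 0).val 1 < (b 0).val 2) : 2 ≤ ((Standard b 1).erase 0).card := by
  have s2 := standardState_two_of_envies b (by simp [envies, bval, hc])
    (by simp [envies, bval, hc])
  have s3 : standardState b 3 = (![{0, 2}, {1}], {3}) := by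
    rw [standardState_succ_zero b s2 2 (by decide) (by simp [envies, bval, hc]),
      resolve_succ_eq_self b (not_mutualEnvy_of_not_envies_zero_one b
        (by simp [envies, bval]; linarith [(b 0).nonneg 0]))]
    decide
  have s4 : standardState b 4 = (![{0, 2}, {1, 3}], ∅) := by
    rw [standardState_succ_one b s3 3 (by decide) (by simp [envies, bval, hc])
        (by simp [envies, bval]; linarith [(b 0).nonneg 0]),
      resolve_succ_eq_self b (not_mutualEnvy_of_not_envies_one_zero b
        (by simp [envies, bval, hc]; norm_num))]
    decide
  rw [standard_eq_standardState_fst, s4]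
  decide

lemma exists_bid_two_le_card_erase_standard_zero (b : Fin 2 → Bid 4) :
    ∃ b' : Bid 4, 2 ≤ ((Standard (Function.update b 0 b') 0).erase 0).card := by
  have h1 (b' : Bid 4) : Function.update b 0 b' 1 = b 1 := Function.update_of_ne (by decide) _ _
  by_cases hc₀ : (b 1).val 0 ≤ 0
  · refine ⟨⟨![0, 0, 9, 9], fun g => by fin_cases g <;> norm_num, 1⟩, ?_⟩
    exact two_le_card_erase_standard_zero_of_nonpos _ (by simp) (by rwa [h1])
  by_cases hc₁ : (b 1).val 1 < (b 1).val 0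
  · refine ⟨⟨![0, 1, 1, 0], fun g => by fin_cases g <;> norm_num, 1⟩, ?_⟩
    exact two_le_card_erase_standard_zero_of_lt _ (by simp) (by rw [h1]; linarith)
      (by rwa [h1])
  · refine ⟨⟨![0, 9, 1, 9], fun g => by fin_cases g <;> norm_num, 1⟩, ?_⟩
    exact two_le_card_erase_standard_zero_of_le _ (by simp) (by rw [h1]; linarith)
      (by rw [h1]; linarith)

lemma exists_bid_two_le_card_erase_standard_one (b : Fin 2 → Bid 4) :
    ∃ b' : Bid 4, 2 ≤ ((Standard (Function.update b 1 b') 1).erase 0).card := by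
  have h0 (b' : Bid 4) : Function.update b 1 b' 0 = b 0 := Function.update_of_ne (by decide) _ _
  by_cases ha : (b 0).val 2 ≤ (b 0).val 0 + (b 0).val 1
  · refine ⟨⟨![0, 1, 0, 9], fun g => by fin_cases g <;> norm_num, 1⟩, ?_⟩
    exact two_le_card_erase_standard_one_of_le _ (by simp) (by rwa [h0])
  · refine ⟨⟨![1, 1, 9, 9], fun g => by fin_cases g <;> norm_num, 1⟩, ?_⟩
    exact two_le_card_erase_standard_one_of_lt _ (by simp) (by rw [h0]; linarith)

end Instance

end ECE

/-- For the instance with exactly 2 agents and 4 goods in which both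
agents have the identical binary additive true valuation `v` with `v g₁ = 0` and
`v g₂ = v g₃ = v g₄ = 1`, Standard-E-C-E has no pure Nash equilibrium: for every bid
profile there is an agent and an alternative bid that strictly improves her true
value. -/
theorem standard_two_binary_four_goods_no_PNE (b : Fin 2 → Bid 4) :
    ∃ (i : Fin 2) (b' : Bid 4),
      value (fun g : Fin 4 => if g = 0 then (0 : ℝ) else 1) (Standard b i) <
        value (fun g : Fin 4 => if g = 0 then (0 : ℝ) else 1)
          (Standard (Function.update b i b') i) := by
  simp only [value_ite_eq_card_erase, Nat.cast_lt]
  have hsum := card_erase_add_card_erase_lt (pairwise_disjoint_standard b zero_ne_one) 0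
  by_cases h : ((Standard b 0).erase 0).card < 2
  · obtain ⟨b', hb'⟩ := exists_bid_two_le_card_erase_standard_zero b
    exact ⟨0, b', h.trans_le hb'⟩
  · obtain ⟨b', hb'⟩ := exists_bid_two_le_card_erase_standard_one b
    exact ⟨1, b', by omega⟩
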